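/- For a one-dimensional Gaussian N(m, σ²) and a symmetric interval I = [-c, c] (c ≥ 0), the function m ↦ P(N(m, σ²) ∈ I) = Φ((c-m)/σ) - Φ((-c-m)/σ) is non-increasing on [0, ∞) (and even in m). -/
import Mathlib


open MeasureTheory Real Set

/-- Standard normal density. -/
noncomputable def phi (x : ℝ) : ℝ := (Real.sqrt (2 * Real.pi))⁻¹ * Real.exp (-x ^ 2 / 2)

/-- Standard normal cumulative distribution function. -/
noncomputable def Phi (x : ℝ) : ℝ := ∫ t in Set.Iic x, phi t

lemma phi_cont : Continuous phi := by
  unfold phi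
  fun_prop

lemma phi_integrable : Integrable phi := by
  have h : phi = fun x => (Real.sqrt (2 * Real.pi))⁻¹ * Real.exp (-(1/2) * x ^ 2) := by
    funext x; unfold phi; ring_nf
  rw [h]
  exact (integrable_exp_neg_mul_sq (by norm_num)).const_mul _

lemma phi_even (x : ℝ) : phi (-x) = phi x := by
  unfold phi; ring_nf

/-- phi is antitone in |x| : if x² ≤ y² then phi y ≤ phi x. -/
lemma phi_le_phi {x y : ℝ} (h : x ^ 2 ≤ y ^ 2) : phi y ≤ phi x := by
  unfold phi
  have : Real.exp (-y ^ 2 / 2) ≤ Real.exp (-x ^ 2 / 2) := by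
    apply Real.exp_le_exp.2; linarith
  have h0 : (0:ℝ) < Real.sqrt (2 * Real.pi) := Real.sqrt_pos.2 (by positivity)
  exact mul_le_mul_of_nonneg_left this (by positivity)

lemma Phi_sub_Phi (a b : ℝ) : Phi b - Phi a = ∫ x in a..b, phi x := by
  unfold Phi
  exact intervalIntegral.integral_Iic_sub_Iic phi_integrable.integrableOn
    phi_integrable.integrableOn

lemma Phi_hasDerivAt (x : ℝ) : HasDerivAt Phi (phi x) x := by
  have h : Phi = fun y => Phi 0 + ∫ t in (0:ℝ)..y, phi t := by
    funext y
    rw [← Phi_sub_Phi 0 y]; ring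
  rw [h]
  apply HasDerivAt.const_add
  exact intervalIntegral.integral_hasDerivAt_right
    (phi_cont.intervalIntegrable _ _)
    (phi_cont.stronglyMeasurableAtFilter _ _) phi_cont.continuousAt

/-- One-dimensional Anderson inequality: for `σ > 0` and `c ≥ 0`, the Gaussian measure
`m ↦ P(N(m,σ²) ∈ [-c,c]) = Φ((c-m)/σ) - Φ((-c-m)/σ)` is non-increasing on `[0,∞)`
and even in `m`. -/
theorem one_dim_anderson {σ : ℝ} (hσ : 0 < σ) {c : ℝ} (hc : 0 ≤ c) :
    AntitoneOn (fun m : ℝ => Phi ((c - m) / σ) - Phi ((-c - m) / σ)) (Set.Ici 0) ∧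
    ∀ m : ℝ, Phi ((c - -m) / σ) - Phi ((-c - -m) / σ)
      = Phi ((c - m) / σ) - Phi ((-c - m) / σ) := by
  have hσ2 : (0:ℝ) < σ ^ 2 := by positivity
  have hder : ∀ m : ℝ, HasDerivAt (fun m : ℝ => Phi ((c - m) / σ) - Phi ((-c - m) / σ))
      (phi ((c - m) / σ) * (-1 / σ) - phi ((-c - m) / σ) * (-1 / σ)) m := by
    intro m
    have h1 : HasDerivAt (fun m : ℝ => (c - m) / σ) (-1 / σ) m := by
      simpa using ((hasDerivAt_id m).const_sub c).div_const σ
    have h2 : HasDerivAt (fun m : ℝ => (-c - m) / σ) (-1 / σ) m := by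
      simpa using ((hasDerivAt_id m).const_sub (-c)).div_const σ
    exact ((Phi_hasDerivAt _).comp m h1).sub ((Phi_hasDerivAt _).comp m h2)
  have hdiff : Differentiable ℝ (fun m : ℝ => Phi ((c - m) / σ) - Phi ((-c - m) / σ)) :=
    fun m => (hder m).differentiableAt
  constructor
  · apply antitoneOn_of_deriv_nonpos (convex_Ici 0) hdiff.continuous.continuousOn
      hdiff.differentiableOn
    intro m hm
    rw [interior_Ici] at hm
    have hm0 : (0:ℝ) ≤ m := le_of_lt hm
    rw [(hder m).deriv]
    have hle : phi ((-c - m) / σ) ≤ phi ((c - m) / σ) := by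
      apply phi_le_phi
      rw [div_pow, div_pow]
      exact div_le_div_of_nonneg_right (by nlinarith) hσ2.le
    have heq : phi ((c - m) / σ) * (-1 / σ) - phi ((-c - m) / σ) * (-1 / σ)
        = (phi ((-c - m) / σ) - phi ((c - m) / σ)) * (1 / σ) := by ring
    rw [heq]
    exact mul_nonpos_of_nonpos_of_nonneg (by linarith) (by positivity)
  · intro m
    rw [Phi_sub_Phi, Phi_sub_Phi]
    have h1 : (∫ x in ((-c - m) / σ)..((c - m) / σ), phi x)
        = ∫ x in ((-c - m) / σ)..((c - m) / σ), phi (-x) := by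
      simp only [phi_even]
    rw [h1, intervalIntegral.integral_comp_neg]
    congr 1 <;> field_simp <;> ring
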